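/- arXiv:1606.02551 — 3 statements merged into one kernel-verified Lean document; each statement's English description precedes it below -/
import Mathlib

section
/- Let Q and R be monic real polynomials in one variable of degrees d₁ and d₂ having no common complex root, and let P = QR, a monic polynomial of degree d = d₁ + d₂. Identify the set of monic real polynomials of degree e with ℝ^e via their non-leading coefficients. Then there exist an open neighborhood U ⊆ ℝ^d of P and real-analytic maps Q̃ : U → ℝ^{d₁} and R̃ : U → ℝ^{d₂} with Q̃(P) = Q and R̃(P) = R, such that every monic polynomial P̃ ∈ U factors as P̃ = Q̃(P̃) · R̃(P̃); moreover the factorization is locally unique: there are neighborhoods V₁ of Q and V₂ of R such that if P̃ ∈ U and P̃ = Q'R' with Q' ∈ V₁ and R' ∈ V₂ monic real polynomials of degrees d₁ and d₂, then Q' = Q̃(P̃) and R' = R̃(P̃). -/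
open Polynomial

/-- The monic real polynomial of degree `e` whose non-leading coefficients are given by
`c : Fin e → ℝ`, namely `X^e + c_{e-1} X^{e-1} + ⋯ + c_0`. -/
noncomputable def monicOfCoeffs {e : ℕ} (c : Fin e → ℝ) : Polynomial ℝ :=
  X ^ e + ∑ i : Fin e, C (c i) * X ^ (i : ℕ)

/-- The linear map sending `c : Fin e → ℝ` to `∑ c_i X^i`. -/
noncomputable def lowPoly (e : ℕ) : (Fin e → ℝ) →ₗ[ℝ] Polynomial ℝ where
  toFun c := ∑ i : Fin e, C (c i) * X ^ (i : ℕ)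
  map_add' a b := by simp [add_mul, Finset.sum_add_distrib]
  map_smul' m a := by
    simp [Finset.smul_sum, Polynomial.smul_eq_C_mul, mul_assoc]

lemma monicOfCoeffs_eq_lowPoly {e : ℕ} (c : Fin e → ℝ) :
    monicOfCoeffs c = X ^ e + lowPoly e c := rfl

lemma lowPoly_coeff {e : ℕ} (c : Fin e → ℝ) (k : ℕ) :
    (lowPoly e c).coeff k = if h : k < e then c ⟨k, h⟩ else 0 := by
  simp only [lowPoly, LinearMap.coe_mk, AddHom.coe_mk, finset_sum_coeff, coeff_C_mul,
    coeff_X_pow]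
  split_ifs with h
  · rw [Finset.sum_eq_single (⟨k, h⟩ : Fin e)]
    · simp
    · intro b _ hb
      simp only [mul_ite, mul_one, mul_zero, ite_eq_right_iff]
      intro hkb
      exact absurd (Fin.ext hkb.symm) hb
    · simp
  · apply Finset.sum_eq_zero
    intro i _
    have : (i : ℕ) ≠ k := fun hik => h (hik ▸ i.isLt)
    simp [this.symm]

lemma lowPoly_degree_lt {e : ℕ} (c : Fin e → ℝ) : (lowPoly e c).degree < (e : ℕ) := by
  rw [degree_lt_iff_coeff_zero]
  intro m hm
  rw [lowPoly_coeff]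
  have : ¬ m < e := by exact_mod_cast not_lt.mpr hm
  simp [this]

lemma lowPoly_eq_zero_iff {e : ℕ} (c : Fin e → ℝ) : lowPoly e c = 0 ↔ c = 0 := by
  constructor
  · intro h
    funext i
    have := congrArg (fun p => Polynomial.coeff p i) h
    simpa [lowPoly_coeff, i.isLt] using this
  · rintro rfl; simp

lemma monicOfCoeffs_coeff {e : ℕ} (c : Fin e → ℝ) (k : ℕ) :
    (monicOfCoeffs c).coeff k = (if k = e then 1 else 0) + (if h : k < e then c ⟨k, h⟩ else 0) := by
  rw [monicOfCoeffs_eq_lowPoly, coeff_add, coeff_X_pow, lowPoly_coeff]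

lemma monicOfCoeffs_coeff_lt {e : ℕ} (c : Fin e → ℝ) (i : Fin e) :
    (monicOfCoeffs c).coeff i = c i := by
  rw [monicOfCoeffs_coeff]
  have h1 : (i : ℕ) ≠ e := Nat.ne_of_lt i.isLt
  simp [h1, i.isLt]

lemma monicOfCoeffs_monic {e : ℕ} (c : Fin e → ℝ) : (monicOfCoeffs c).Monic := by
  apply monic_of_natDegree_le_of_coeff_eq_one e
  · rw [natDegree_le_iff_coeff_eq_zero]
    intro N hN
    rw [monicOfCoeffs_coeff]
    simp [Nat.ne_of_gt hN, not_lt.mpr hN.le]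
  · rw [monicOfCoeffs_coeff]
    simp

lemma monicOfCoeffs_natDegree {e : ℕ} (c : Fin e → ℝ) : (monicOfCoeffs c).natDegree = e := by
  apply le_antisymm
  · rw [natDegree_le_iff_coeff_eq_zero]
    intro N hN
    rw [monicOfCoeffs_coeff]
    simp [Nat.ne_of_gt hN, not_lt.mpr hN.le]
  · apply le_natDegree_of_ne_zero
    rw [monicOfCoeffs_coeff]
    simp

lemma monicOfCoeffs_degree {e : ℕ} (c : Fin e → ℝ) : (monicOfCoeffs c).degree = e := by
  rw [Polynomial.degree_eq_natDegree (monicOfCoeffs_monic c).ne_zero, monicOfCoeffs_natDegree]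

lemma monicOfCoeffs_of_monic {e : ℕ} {p : Polynomial ℝ} (hp : p.Monic)
    (hd : p.natDegree = e) : monicOfCoeffs (fun i : Fin e => p.coeff i) = p := by
  ext k
  rw [monicOfCoeffs_coeff]
  rcases lt_trichotomy k e with h | h | h
  · simp [Nat.ne_of_lt h, h]
  · subst h
    have : p.coeff k = 1 := by
      have := hp.leadingCoeff
      rwa [leadingCoeff, hd] at this
    simp [this]
  · rw [p.coeff_eq_zero_of_natDegree_lt (hd ▸ h)]
    simp [Nat.ne_of_gt h, not_lt.mpr h.le]

/-- The linear map sending a polynomial to its first `d` coefficients. -/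
noncomputable def coeffFn (d : ℕ) : Polynomial ℝ →ₗ[ℝ] (Fin d → ℝ) where
  toFun p := fun i => p.coeff i
  map_add' a b := by funext i; simp
  map_smul' m a := by funext i; simp

@[simp] lemma coeffFn_apply (d : ℕ) (p : Polynomial ℝ) (i : Fin d) :
    coeffFn d p i = p.coeff i := rfl

/-- The "linear part" of the coefficients-of-product map. -/
noncomputable def crossL (d₁ d₂ : ℕ) : ((Fin d₁ → ℝ) × (Fin d₂ → ℝ)) →ₗ[ℝ] (Fin (d₁ + d₂) → ℝ) :=
  (coeffFn (d₁ + d₂)).comp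
    ((LinearMap.mulLeft ℝ ((X : Polynomial ℝ) ^ d₂)).comp
        ((lowPoly d₁).comp (LinearMap.fst ℝ _ _)) +
      (LinearMap.mulLeft ℝ ((X : Polynomial ℝ) ^ d₁)).comp
        ((lowPoly d₂).comp (LinearMap.snd ℝ _ _)))

lemma crossL_apply (d₁ d₂ : ℕ) (p : (Fin d₁ → ℝ) × (Fin d₂ → ℝ)) (i : Fin (d₁ + d₂)) :
    crossL d₁ d₂ p i = ((X : Polynomial ℝ) ^ d₂ * lowPoly d₁ p.1
      + (X : Polynomial ℝ) ^ d₁ * lowPoly d₂ p.2).coeff i := rfl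

/-- The bilinear part. -/
noncomputable def crossB (d₁ d₂ : ℕ) :
    (Fin d₁ → ℝ) →ₗ[ℝ] (Fin d₂ → ℝ) →ₗ[ℝ] (Fin (d₁ + d₂) → ℝ) :=
  LinearMap.mk₂ ℝ (fun a b => coeffFn (d₁ + d₂) (lowPoly d₁ a * lowPoly d₂ b))
    (fun a a' b => by simp [add_mul])
    (fun m a b => by simp [smul_mul_assoc])
    (fun a b b' => by simp [mul_add])
    (fun m a b => by simp [mul_smul_comm])

lemma crossB_apply (d₁ d₂ : ℕ) (a : Fin d₁ → ℝ) (b : Fin d₂ → ℝ) (i : Fin (d₁ + d₂)) :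
    crossB d₁ d₂ a b i = (lowPoly d₁ a * lowPoly d₂ b).coeff i := rfl

lemma isCoprime_monicOfCoeffs {d₁ d₂ : ℕ} (q : Fin d₁ → ℝ) (r : Fin d₂ → ℝ)
    (hcoprime : ¬ ∃ z : ℂ, Polynomial.aeval z (monicOfCoeffs q) = 0 ∧
        Polynomial.aeval z (monicOfCoeffs r) = 0) :
    IsCoprime (monicOfCoeffs q) (monicOfCoeffs r) := by
  apply (Polynomial.isCoprime_iff_aeval_ne_zero_of_isAlgClosed (k := ℝ) ℂ
    (monicOfCoeffs q) (monicOfCoeffs r)).mpr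
  intro a
  by_contra h
  push_neg at h
  exact hcoprime ⟨a, h.1, h.2⟩

/-- The candidate derivative of the coefficients-of-product map at `(q, r)`:
`(v₁, v₂) ↦` coefficients of `v₁·R + Q·v₂`. -/
noncomputable def derivMap (d₁ d₂ : ℕ) (q : Fin d₁ → ℝ) (r : Fin d₂ → ℝ) :
    ((Fin d₁ → ℝ) × (Fin d₂ → ℝ)) →ₗ[ℝ] (Fin (d₁ + d₂) → ℝ) :=
  (coeffFn (d₁ + d₂)).comp
    ((LinearMap.mulRight ℝ (monicOfCoeffs r)).comp ((lowPoly d₁).comp (LinearMap.fst ℝ _ _)) +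
      (LinearMap.mulLeft ℝ (monicOfCoeffs q)).comp ((lowPoly d₂).comp (LinearMap.snd ℝ _ _)))

lemma derivMap_apply (d₁ d₂ : ℕ) (q : Fin d₁ → ℝ) (r : Fin d₂ → ℝ)
    (v : (Fin d₁ → ℝ) × (Fin d₂ → ℝ)) (i : Fin (d₁ + d₂)) :
    derivMap d₁ d₂ q r v i =
      (lowPoly d₁ v.1 * monicOfCoeffs r + monicOfCoeffs q * lowPoly d₂ v.2).coeff i := rfl

lemma derivMap_injective (d₁ d₂ : ℕ) (q : Fin d₁ → ℝ) (r : Fin d₂ → ℝ)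
    (hc : IsCoprime (monicOfCoeffs q) (monicOfCoeffs r)) :
    Function.Injective (derivMap d₁ d₂ q r) := by
  rw [← LinearMap.ker_eq_bot, LinearMap.ker_eq_bot']
  intro v hv
  set S : Polynomial ℝ := lowPoly d₁ v.1 * monicOfCoeffs r + monicOfCoeffs q * lowPoly d₂ v.2
    with hSdef
  have hdeg1 : (lowPoly d₁ v.1 * monicOfCoeffs r).degree < ((d₁ + d₂ : ℕ) : WithBot ℕ) := by
    rw [degree_mul, monicOfCoeffs_degree, Nat.cast_add]
    calc (lowPoly d₁ v.1).degree + (d₂ : WithBot ℕ)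
        < (d₁ : WithBot ℕ) + (d₂ : WithBot ℕ) :=
          WithBot.add_lt_add_right (by exact WithBot.coe_ne_bot) (lowPoly_degree_lt _)
      _ = _ := rfl
  have hdeg2 : (monicOfCoeffs q * lowPoly d₂ v.2).degree < ((d₁ + d₂ : ℕ) : WithBot ℕ) := by
    rw [degree_mul, monicOfCoeffs_degree, Nat.cast_add]
    exact WithBot.add_lt_add_left (by exact WithBot.coe_ne_bot) (lowPoly_degree_lt _)
  have hSdeg : S.degree < ((d₁ + d₂ : ℕ) : WithBot ℕ) :=
    lt_of_le_of_lt (degree_add_le _ _) (max_lt hdeg1 hdeg2)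
  have hS0 : S = 0 := by
    ext n
    rcases lt_or_ge n (d₁ + d₂) with h | h
    · exact congrFun hv ⟨n, h⟩
    · exact coeff_eq_zero_of_degree_lt (lt_of_lt_of_le hSdeg (by exact_mod_cast h))
  have hdvd : monicOfCoeffs q ∣ lowPoly d₁ v.1 * monicOfCoeffs r := by
    refine ⟨-(lowPoly d₂ v.2), ?_⟩
    have := hS0
    rw [hSdef] at this
    linear_combination this
  have hlow1 : lowPoly d₁ v.1 = 0 := by
    refine eq_zero_of_dvd_of_degree_lt (hc.dvd_of_dvd_mul_right hdvd) ?_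
    rw [monicOfCoeffs_degree]
    exact lowPoly_degree_lt _
  have hlow2 : lowPoly d₂ v.2 = 0 := by
    rw [hSdef, hlow1, zero_mul, zero_add, mul_eq_zero] at hS0
    exact hS0.resolve_left (monicOfCoeffs_monic q).ne_zero
  have h1 : v.1 = 0 := (lowPoly_eq_zero_iff _).mp hlow1
  have h2 : v.2 = 0 := (lowPoly_eq_zero_iff _).mp hlow2
  exact Prod.ext h1 h2

/-- The derivative as a linear equivalence. -/
noncomputable def derivEquiv (d₁ d₂ : ℕ) (q : Fin d₁ → ℝ) (r : Fin d₂ → ℝ)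
    (hc : IsCoprime (monicOfCoeffs q) (monicOfCoeffs r)) :
    ((Fin d₁ → ℝ) × (Fin d₂ → ℝ)) ≃ₗ[ℝ] (Fin (d₁ + d₂) → ℝ) :=
  LinearMap.linearEquivOfInjective (derivMap d₁ d₂ q r) (derivMap_injective d₁ d₂ q r hc)
    (by simp [Module.finrank_prod, Module.finrank_fin_fun])

lemma derivEquiv_apply (d₁ d₂ : ℕ) (q : Fin d₁ → ℝ) (r : Fin d₂ → ℝ)
    (hc : IsCoprime (monicOfCoeffs q) (monicOfCoeffs r)) (v) :
    derivEquiv d₁ d₂ q r hc v = derivMap d₁ d₂ q r v :=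
  LinearMap.linearEquivOfInjective_apply _ _ _

set_option maxHeartbeats 2000000 in
/-- **Analytic factorization of polynomials near a product of coprime factors.** If `Q`, `R` are
monic real polynomials of degrees `d₁`, `d₂` with no common complex root and `P = QR`, then on a
neighborhood `U` of `P` (inside the space `ℝ^{d₁+d₂}` of monic polynomials of degree `d₁ + d₂`)
there are real-analytic maps `Q̃`, `R̃` with `Q̃(P) = Q`, `R̃(P) = R`, factoring every `P̃ ∈ U` as
`P̃ = Q̃(P̃)·R̃(P̃)`; moreover this factorization is locally unique. -/
theorem analytic_factorization_of_monic_polynomials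
    (d₁ d₂ : ℕ) (q : Fin d₁ → ℝ) (r : Fin d₂ → ℝ)
    (hcoprime : ¬ ∃ z : ℂ, Polynomial.aeval z (monicOfCoeffs q) = 0 ∧
        Polynomial.aeval z (monicOfCoeffs r) = 0) :
    ∃ (U : Set (Fin (d₁ + d₂) → ℝ)) (Qt : (Fin (d₁ + d₂) → ℝ) → Fin d₁ → ℝ)
      (Rt : (Fin (d₁ + d₂) → ℝ) → Fin d₂ → ℝ),
      IsOpen U ∧
      (fun i : Fin (d₁ + d₂) => (monicOfCoeffs q * monicOfCoeffs r).coeff i) ∈ U ∧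
      AnalyticOnNhd ℝ Qt U ∧ AnalyticOnNhd ℝ Rt U ∧
      Qt (fun i => (monicOfCoeffs q * monicOfCoeffs r).coeff i) = q ∧
      Rt (fun i => (monicOfCoeffs q * monicOfCoeffs r).coeff i) = r ∧
      (∀ c ∈ U, monicOfCoeffs c = monicOfCoeffs (Qt c) * monicOfCoeffs (Rt c)) ∧
      ∃ (V₁ : Set (Fin d₁ → ℝ)) (V₂ : Set (Fin d₂ → ℝ)),
        IsOpen V₁ ∧ q ∈ V₁ ∧ IsOpen V₂ ∧ r ∈ V₂ ∧
        ∀ c ∈ U, ∀ q' ∈ V₁, ∀ r' ∈ V₂,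
          monicOfCoeffs c = monicOfCoeffs q' * monicOfCoeffs r' →
          q' = Qt c ∧ r' = Rt c := by
  classical
  have hcop : IsCoprime (monicOfCoeffs q) (monicOfCoeffs r) :=
    isCoprime_monicOfCoeffs q r hcoprime
  set F : ((Fin d₁ → ℝ) × (Fin d₂ → ℝ)) → (Fin (d₁ + d₂) → ℝ) :=
    fun p => fun i => (monicOfCoeffs p.1 * monicOfCoeffs p.2).coeff i with hF
  let c₀ : Fin (d₁ + d₂) → ℝ := fun i => ((X : Polynomial ℝ) ^ (d₁ + d₂)).coeff i
  let Lc : ((Fin d₁ → ℝ) × (Fin d₂ → ℝ)) →L[ℝ] (Fin (d₁ + d₂) → ℝ) :=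
    LinearMap.toContinuousLinearMap (crossL d₁ d₂)
  let Bc : (Fin d₁ → ℝ) →L[ℝ] ((Fin d₂ → ℝ) →L[ℝ] (Fin (d₁ + d₂) → ℝ)) :=
    LinearMap.toContinuousLinearMap
      ((LinearMap.toContinuousLinearMap :
          ((Fin d₂ → ℝ) →ₗ[ℝ] (Fin (d₁ + d₂) → ℝ)) ≃ₗ[ℝ] _).toLinearMap.comp (crossB d₁ d₂))
  have hBc : ∀ a b, Bc a b = crossB d₁ d₂ a b := by
    intro a b
    simp only [Bc, LinearMap.coe_toContinuousLinearMap', LinearMap.coe_comp,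
      LinearEquiv.coe_coe, Function.comp_apply]
  have hB : IsBoundedBilinearMap ℝ
      (fun p : (Fin d₁ → ℝ) × (Fin d₂ → ℝ) => Bc p.1 p.2) := Bc.isBoundedBilinearMap
  have hFdef : F = fun p => c₀ + Lc p + Bc p.1 p.2 := by
    funext p
    funext i
    show (monicOfCoeffs p.1 * monicOfCoeffs p.2).coeff i = (c₀ + Lc p + Bc p.1 p.2) i
    rw [Pi.add_apply, Pi.add_apply, hBc]
    simp only [c₀, Lc, LinearMap.coe_toContinuousLinearMap', crossL_apply, crossB_apply]
    rw [← coeff_add, ← coeff_add]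
    congr 1
    rw [monicOfCoeffs_eq_lowPoly, monicOfCoeffs_eq_lowPoly]
    ring
  let Te : ((Fin d₁ → ℝ) × (Fin d₂ → ℝ)) ≃L[ℝ] (Fin (d₁ + d₂) → ℝ) :=
    (derivEquiv d₁ d₂ q r hcop).toContinuousLinearEquiv
  have hTe : ∀ v, Te v = derivMap d₁ d₂ q r v := by
    intro v
    show (derivEquiv d₁ d₂ q r hcop).toContinuousLinearEquiv v = _
    rw [LinearEquiv.coe_toContinuousLinearEquiv']
    exact derivEquiv_apply d₁ d₂ q r hcop v
  have hTder : (Te : ((Fin d₁ → ℝ) × (Fin d₂ → ℝ)) →L[ℝ] (Fin (d₁ + d₂) → ℝ))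
      = Lc + hB.deriv (q, r) := by
    apply ContinuousLinearMap.ext
    intro v
    rw [ContinuousLinearEquiv.coe_coe, hTe]
    rw [ContinuousLinearMap.add_apply, hB.deriv_apply]
    funext i
    rw [Pi.add_apply, Pi.add_apply, hBc, hBc]
    simp only [Lc, LinearMap.coe_toContinuousLinearMap', crossL_apply, crossB_apply,
      derivMap_apply]
    rw [← coeff_add, ← coeff_add]
    congr 1
    rw [monicOfCoeffs_eq_lowPoly, monicOfCoeffs_eq_lowPoly]
    ring
  have hT : HasFDerivAt F (Te : _ →L[ℝ] _) (q, r) := by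
    rw [hFdef, hTder]
    exact (Lc.hasFDerivAt.const_add c₀).add (hB.hasFDerivAt (q, r))
  have hFanal : ∀ p, AnalyticAt ℝ F p := by
    intro p
    rw [hFdef]
    exact (analyticAt_const.add (Lc.analyticAt p)).add (Bc.analyticAt_bilinear p)
  have hstrict : HasStrictFDerivAt F (Te : _ →L[ℝ] _) (q, r) := by
    have h := (hFanal (q, r)).hasStrictFDerivAt
    rwa [hT.fderiv] at h
  let f := hstrict.toOpenPartialHomeomorph F
  have hfcoe : ⇑f = F := rfl
  have hfsource : (q, r) ∈ f.source := hstrict.mem_toOpenPartialHomeomorph_source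
  have hCD : ContDiff ℝ (⊤ : ℕ∞) F := by
    rw [hFdef]
    exact (contDiff_const.add Lc.contDiff).add hB.contDiff
  have hcont : Continuous fun p => fderiv ℝ F p := hCD.continuous_fderiv (by simp)
  set g : ((Fin d₁ → ℝ) × (Fin d₂ → ℝ)) →
      (((Fin d₁ → ℝ) × (Fin d₂ → ℝ)) →L[ℝ] ((Fin d₁ → ℝ) × (Fin d₂ → ℝ))) :=
    fun p => ((Te.symm : (Fin (d₁ + d₂) → ℝ) →L[ℝ] _).comp (fderiv ℝ F p)) with hg
  have hgc : Continuous g := continuous_const.clm_comp hcont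
  set s' : Set ((Fin d₁ → ℝ) × (Fin d₂ → ℝ)) := g ⁻¹' {u | IsUnit u} with hs'
  have hs'open : IsOpen s' := Units.isOpen.preimage hgc
  have hcenter : (q, r) ∈ s' := by
    show IsUnit (g (q, r))
    have h2 : g (q, r) = ContinuousLinearMap.id ℝ _ := by
      rw [hg]
      simp only [hT.fderiv]
      apply ContinuousLinearMap.ext
      intro v
      simp
    rw [h2, ← ContinuousLinearMap.one_def]
    exact isUnit_one
  let f' := f.restrOpen s' hs'open
  have hf'coe : ⇑f' = F := rfl
  have hf'source : f'.source = f.source ∩ s' := f.restrOpen_source s' hs'open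
  have hQRsource : (q, r) ∈ f'.source := by rw [hf'source]; exact ⟨hfsource, hcenter⟩
  have hsymm_anal : ∀ c ∈ f'.target, AnalyticAt ℝ (⇑f'.symm) c := by
    intro c hc
    have hp' : f'.symm c ∈ f'.source := f'.map_target hc
    have hps' : f'.symm c ∈ s' := by rw [hf'source] at hp'; exact hp'.2
    obtain ⟨u, hu⟩ := hps'
    let e₀ := (ContinuousLinearEquiv.ofUnit u).trans Te
    have hfd : fderiv ℝ (⇑f') (f'.symm c) = (e₀ : _ →L[ℝ] _) := by
      rw [hf'coe]
      apply ContinuousLinearMap.ext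
      intro x
      have hux : (u : _ →L[ℝ] _) x = Te.symm (fderiv ℝ F (f'.symm c) x) := by
        rw [hu]; rfl
      show fderiv ℝ F (f'.symm c) x = e₀ x
      have he₀ : e₀ x = Te ((u : _ →L[ℝ] _) x) := rfl
      rw [he₀, hux, Te.apply_symm_apply]
    exact f'.analyticAt_symm hc (hFanal _) hfd
  have hleft : f'.symm (F (q, r)) = (q, r) := f'.left_inv hQRsource
  refine ⟨f'.target, fun c => (f'.symm c).1, fun c => (f'.symm c).2, f'.open_target,
    (by have := f'.map_source hQRsource; rw [hf'coe] at this; exact this), ?_, ?_, ?_, ?_, ?_, ?_⟩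
  · intro c hc
    exact analyticAt_fst.comp (hsymm_anal c hc)
  · intro c hc
    exact analyticAt_snd.comp (hsymm_anal c hc)
  · exact congrArg Prod.fst hleft
  · exact congrArg Prod.snd hleft
  · intro c hc
    have hri : F (f'.symm c) = c := f'.right_inv hc
    have hm : (monicOfCoeffs (f'.symm c).1 * monicOfCoeffs (f'.symm c).2).Monic :=
      (monicOfCoeffs_monic _).mul (monicOfCoeffs_monic _)
    have hnd : (monicOfCoeffs (f'.symm c).1 * monicOfCoeffs (f'.symm c).2).natDegree
        = d₁ + d₂ := by
      rw [(monicOfCoeffs_monic _).natDegree_mul (monicOfCoeffs_monic _),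
        monicOfCoeffs_natDegree, monicOfCoeffs_natDegree]
    have hmono := monicOfCoeffs_of_monic hm hnd
    rw [← hmono]
    congr 1
    exact hri.symm
  · obtain ⟨V₁, V₂, hV₁, hV₂, hqV, hrV, hsub⟩ :=
      isOpen_prod_iff.mp f'.open_source q r hQRsource
    refine ⟨V₁, V₂, hV₁, hqV, hV₂, hrV, ?_⟩
    intro c hc q' hq' r' hr' heq
    have hFq' : F (q', r') = c := by
      funext i
      show (monicOfCoeffs q' * monicOfCoeffs r').coeff i = c i
      rw [← heq, monicOfCoeffs_coeff_lt]
    have hinj := f'.injOn (hsub (Set.mk_mem_prod hq' hr')) (f'.map_target hc)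
      (by show F (q', r') = F (f'.symm c); rw [hFq']; exact (f'.right_inv hc).symm)
    exact ⟨congrArg Prod.fst hinj, congrArg Prod.snd hinj⟩
end

section
/- Let B̄ be the closed unit ball of ℝ^n, let N ≥ n + 2, and let ω : B̄ → ℝ^N be smooth (i.e., the restriction of a smooth map on an open neighborhood of B̄) with Dω(q) injective for every q ∈ B̄. Then there exist smooth maps ν, b : B̄ → ℝ^N such that for every q ∈ B̄: |ν(q)| = |b(q)| = 1, ν(q) · b(q) = 0, and both ν(q) and b(q) are orthogonal to the range of the derivative Dω(q) : ℝ^n → ℝ^N. -/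
open Set
open scoped RealInnerProductSpace


section core

variable {E F : Type*} [NormedAddCommGroup E] [NormedSpace ℝ E]
  [NormedAddCommGroup F] [NormedSpace ℝ F]

/-- Iterated projections along the radial segment. -/
noncomputable def iterProj (P : E → (F →L[ℝ] F)) (m : ℕ) (v : F) : ℕ → E → F
  | 0, _ => v
  | (j+1), q => P (((j+1 : ℝ)/(m : ℝ)) • q) (iterProj P m v j q)

theorem core_exists [FiniteDimensional ℝ E]
    (P : E → (F →L[ℝ] F))
    (hP : ContDiffOn ℝ (⊤ : ℕ∞) P (Metric.closedBall 0 1))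
    (hidem : ∀ q ∈ Metric.closedBall (0:E) 1, ∀ x, P q (P q x) = P q x)
    (v w : F) (hv : P 0 v = v) (hw : P 0 w = w) :
    ∃ f g : E → F,
      ContDiffOn ℝ (⊤ : ℕ∞) f (Metric.closedBall 0 1) ∧
      ContDiffOn ℝ (⊤ : ℕ∞) g (Metric.closedBall 0 1) ∧
      ∀ q ∈ Metric.closedBall (0:E) 1,
        P q (f q) = f q ∧ P q (g q) = g q ∧
        ∀ a b : ℝ, a • f q + b • g q = 0 → a • v + b • w = 0 := by
  classical
  set B := Metric.closedBall (0:E) 1 with hB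
  -- uniform continuity on the compact set [0,1] × B
  have hKcomp : IsCompact ((Icc (0:ℝ) 1) ×ˢ B) :=
    isCompact_Icc.prod (isCompact_closedBall 0 1)
  have hmaps : MapsTo (fun p : ℝ × E => p.1 • p.2) ((Icc (0:ℝ) 1) ×ˢ B) B := by
    rintro ⟨t, q⟩ ⟨ht, hq⟩
    simp only [B, Metric.mem_closedBall, dist_zero_right] at hq ⊢
    calc ‖t • q‖ = |t| * ‖q‖ := by rw [norm_smul, Real.norm_eq_abs]
    _ ≤ 1 * 1 := by
        apply mul_le_mul _ hq (norm_nonneg q) zero_le_one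
        rw [abs_of_nonneg ht.1]; exact ht.2
    _ = 1 := one_mul 1
  have hcont : ContinuousOn (fun p : ℝ × E => P (p.1 • p.2)) ((Icc (0:ℝ) 1) ×ˢ B) :=
    hP.continuousOn.comp (continuous_smul.continuousOn) hmaps
  obtain ⟨δ, hδpos, hδ⟩ := Metric.uniformContinuousOn_iff.mp
    (hKcomp.uniformContinuousOn_of_continuous hcont) (1/2) (by norm_num)
  obtain ⟨m, hmgt⟩ := exists_nat_gt (max 1 (1/δ))
  have hm1 : 1 ≤ m := by
    have := lt_of_le_of_lt (le_max_left 1 (1/δ)) hmgt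
    exact_mod_cast this.le
  have hmpos : (0:ℝ) < m := by positivity
  have hinvm : (1:ℝ)/m < δ := by
    have h1 : 1/δ < m := lt_of_le_of_lt (le_max_right 1 (1/δ)) hmgt
    rw [div_lt_iff₀ hmpos]
    rw [div_lt_iff₀ hδpos] at h1
    linarith [mul_comm δ (m:ℝ)]
  -- key step estimate
  have hstep : ∀ q ∈ B, ∀ j : ℕ, j < m →
      ‖P (((j+1 : ℝ)/(m:ℝ)) • q) - P (((j : ℝ)/(m:ℝ)) • q)‖ < 1/2 := by
    intro q hq j hj
    have hj1 : ((j:ℝ)+1) ≤ m := by exact_mod_cast hj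
    have hx : ((((j:ℝ)+1)/(m:ℝ), q)) ∈ (Icc (0:ℝ) 1) ×ˢ B := by
      constructor
      · constructor
        · positivity
        · rw [div_le_one hmpos]; exact hj1
      · exact hq
    have hy : ((((j:ℝ))/(m:ℝ), q)) ∈ (Icc (0:ℝ) 1) ×ˢ B := by
      constructor
      · constructor
        · positivity
        · rw [div_le_one hmpos]; linarith
      · exact hq
    have hdist : dist ((((j:ℝ)+1)/(m:ℝ), q)) ((((j:ℝ))/(m:ℝ), q)) < δ := by
      rw [Prod.dist_eq]
      simp only [dist_self]
      rw [sup_lt_iff]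
      refine ⟨?_, hδpos⟩
      rw [Real.dist_eq]
      have : (↑j + 1) / (m:ℝ) - ↑j / ↑m = 1/m := by field_simp; ring
      rw [this, abs_of_pos (by positivity)]
      exact hinvm
    have := hδ _ hx _ hy hdist
    rw [dist_eq_norm] at this
    convert this using 3 <;> push_cast <;> ring
  -- smoothness of the radial rescaling
  have hsmul_maps : ∀ j : ℕ, j ≤ m → MapsTo (fun q : E => ((j:ℝ)/(m:ℝ)) • q) B B := by
    intro j hj q hq
    simp only [B, Metric.mem_closedBall, dist_zero_right] at hq ⊢
    rw [norm_smul, Real.norm_eq_abs, abs_of_nonneg (by positivity)]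
    have h1 : (j:ℝ)/(m:ℝ) ≤ 1 := by
      rw [div_le_one hmpos]; exact_mod_cast hj
    calc (j:ℝ)/m * ‖q‖ ≤ 1 * 1 := by
          exact mul_le_mul h1 hq (norm_nonneg q) zero_le_one
    _ = 1 := one_mul 1
  -- the key induction
  have key : ∀ j : ℕ, j ≤ m →
      (ContDiffOn ℝ (⊤ : ℕ∞) (iterProj P m v j) B ∧ ContDiffOn ℝ (⊤ : ℕ∞) (iterProj P m w j) B) ∧
      ∀ q ∈ B,
        (P (((j:ℝ)/(m:ℝ)) • q) (iterProj P m v j q) = iterProj P m v j q ∧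
         P (((j:ℝ)/(m:ℝ)) • q) (iterProj P m w j q) = iterProj P m w j q) ∧
        ∀ a b : ℝ,
          (1/2:ℝ)^j * ‖a • v + b • w‖ ≤ ‖a • iterProj P m v j q + b • iterProj P m w j q‖ := by
    intro j
    induction j with
    | zero =>
      intro _
      refine ⟨⟨contDiffOn_const, contDiffOn_const⟩, ?_⟩
      intro q hq
      have h0 : (((0:ℕ):ℝ)/(m:ℝ)) • q = (0:E) := by
        norm_num
      refine ⟨?_, ?_⟩
      · rw [h0]; exact ⟨hv, hw⟩
      · intro a b; simp [iterProj]
    | succ j ih =>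
      intro hj1
      have hjm : j ≤ m := le_of_lt (Nat.lt_of_succ_le hj1)
      obtain ⟨⟨hfs, hgs⟩, hprop⟩ := ih hjm
      have hptsmooth : ContDiffOn ℝ (⊤ : ℕ∞) (fun q : E => P (((j+1:ℝ)/(m:ℝ)) • q)) B := by
        have hmap := hsmul_maps (j+1) hj1
        push_cast at hmap
        exact hP.comp ((contDiff_id.const_smul ((j+1:ℝ)/(m:ℝ))).contDiffOn) hmap
      have hmem : ∀ q ∈ B, ((j+1:ℝ)/(m:ℝ)) • q ∈ B := by
        intro q hq
        have hmap := hsmul_maps (j+1) hj1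
        push_cast at hmap
        exact hmap hq
      constructor
      · constructor
        · exact fun q hq => ((hptsmooth q hq).clm_apply (hfs q hq) :)
        · exact fun q hq => ((hptsmooth q hq).clm_apply (hgs q hq) :)
      · intro q hq
        obtain ⟨⟨hfv, hfw⟩, hest⟩ := hprop q hq
        have hfix : ∀ x : F, P (((j+1:ℝ)/(m:ℝ)) • q) (P (((j+1:ℝ)/(m:ℝ)) • q) x)
            = P (((j+1:ℝ)/(m:ℝ)) • q) x := hidem _ (hmem q hq)
        constructor
        · constructor
          · show P ((((j+1:ℕ):ℝ)/(m:ℝ)) • q) _ = _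
            push_cast
            simp only [iterProj]
            exact hfix _
          · show P ((((j+1:ℕ):ℝ)/(m:ℝ)) • q) _ = _
            push_cast
            simp only [iterProj]
            exact hfix _
        · intro a b
          set x := a • iterProj P m v j q + b • iterProj P m w j q with hxdef
          have hPx : P (((j:ℝ)/(m:ℝ)) • q) x = x := by
            rw [hxdef, map_add, map_smul, map_smul, hfv, hfw]
          have hnew : a • iterProj P m v (j+1) q + b • iterProj P m w (j+1) q
              = P (((j+1:ℝ)/(m:ℝ)) • q) x := by
            simp only [iterProj, hxdef, map_add, map_smul]
          rw [hnew]
          have hdiff : ‖P (((j+1:ℝ)/(m:ℝ)) • q) x - x‖ ≤ (1/2) * ‖x‖ := by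
            have heq : P (((j+1:ℝ)/(m:ℝ)) • q) x - x
                = (P (((j+1:ℝ)/(m:ℝ)) • q) - P (((j:ℝ)/(m:ℝ)) • q)) x := by
              rw [ContinuousLinearMap.sub_apply, hPx]
            rw [heq]
            calc ‖(P (((j+1:ℝ)/(m:ℝ)) • q) - P (((j:ℝ)/(m:ℝ)) • q)) x‖
                ≤ ‖P (((j+1:ℝ)/(m:ℝ)) • q) - P (((j:ℝ)/(m:ℝ)) • q)‖ * ‖x‖ :=
                  ContinuousLinearMap.le_opNorm _ _
              _ ≤ (1/2) * ‖x‖ := by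
                  apply mul_le_mul_of_nonneg_right (le_of_lt (hstep q hq j (Nat.lt_of_succ_le hj1)))
                    (norm_nonneg x)
          have h1 : ‖x‖ - ‖P (((j+1:ℝ)/(m:ℝ)) • q) x - x‖ ≤ ‖P (((j+1:ℝ)/(m:ℝ)) • q) x‖ := by
            have := norm_sub_norm_le (P (((j+1:ℝ)/(m:ℝ)) • q) x) x
            have h2 := norm_sub_le_norm_sub_add_norm_sub (P (((j+1:ℝ)/(m:ℝ)) • q) x) x 0
            simp only [sub_zero] at h2
            linarith [abs_norm_sub_norm_le (P (((j+1:ℝ)/(m:ℝ)) • q) x) x,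
              abs_le.mp (abs_norm_sub_norm_le (P (((j+1:ℝ)/(m:ℝ)) • q) x) x)]
          calc (1/2:ℝ)^(j+1) * ‖a • v + b • w‖
              = (1/2) * ((1/2:ℝ)^j * ‖a • v + b • w‖) := by ring
            _ ≤ (1/2) * ‖x‖ := by
                apply mul_le_mul_of_nonneg_left (hest a b) (by norm_num)
            _ = ‖x‖ - (1/2) * ‖x‖ := by ring
            _ ≤ ‖x‖ - ‖P (((j+1:ℝ)/(m:ℝ)) • q) x - x‖ := by linarith
            _ ≤ ‖P (((j+1:ℝ)/(m:ℝ)) • q) x‖ := h1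
  -- conclusion
  obtain ⟨⟨hfs, hgs⟩, hprop⟩ := key m le_rfl
  refine ⟨iterProj P m v m, iterProj P m w m, hfs, hgs, ?_⟩
  intro q hq
  have hone : ((m:ℝ)/(m:ℝ)) • q = q := by
    rw [div_self (ne_of_gt hmpos), one_smul]
  obtain ⟨⟨hfv, hfw⟩, hest⟩ := hprop q hq
  rw [hone] at hfv hfw
  refine ⟨hfv, hfw, ?_⟩
  intro a b hab
  have := hest a b
  rw [hab, norm_zero] at this
  have hle : ‖a • v + b • w‖ ≤ 0 := by
    nlinarith [norm_nonneg (a • v + b • w), pow_pos (by norm_num : (0:ℝ) < 1/2) m]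
  exact norm_le_zero_iff.mp hle

end core

section proj

open ContinuousLinearMap

variable {E F : Type*} [NormedAddCommGroup E] [InnerProductSpace ℝ E]
  [NormedAddCommGroup F] [InnerProductSpace ℝ F]
  [FiniteDimensional ℝ E] [FiniteDimensional ℝ F]


/-- Orthogonal projection onto the orthogonal complement of the range of `T`,
as an explicit algebraic formula. -/
noncomputable def projCompl (T : E →L[ℝ] F) : F →L[ℝ] F :=
  ContinuousLinearMap.id ℝ F -
    (T.comp (Ring.inverse ((ContinuousLinearMap.adjoint T).comp T))).comp
      (ContinuousLinearMap.adjoint T)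

lemma isUnit_adjoint_comp (T : E →L[ℝ] F) (hT : Function.Injective T) :
    IsUnit ((ContinuousLinearMap.adjoint T).comp T) := by
  rw [ContinuousLinearMap.isUnit_iff_bijective]
  have hker : ∀ x, ((ContinuousLinearMap.adjoint T).comp T) x = 0 → x = 0 := by
    intro x hx
    have h1 : ⟪T x, T x⟫ = 0 := by
      rw [← T.adjoint_inner_left x (T x)]
      have : ContinuousLinearMap.adjoint T (T x) = 0 := hx
      rw [this, inner_zero_left]
    have h2 : T x = 0 := inner_self_eq_zero.mp h1
    have h3 : T x = T 0 := by rw [h2, map_zero]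
    exact hT h3
  have hinj : Function.Injective ((ContinuousLinearMap.adjoint T).comp T) := by
    intro a b hab
    have := hker (a - b) (by rw [map_sub, hab, sub_self])
    exact sub_eq_zero.mp this
  refine ⟨hinj, ?_⟩
  exact LinearMap.injective_iff_surjective.mp hinj

lemma adjoint_projCompl_apply (T : E →L[ℝ] F) (hT : Function.Injective T) (x : F) :
    ContinuousLinearMap.adjoint T (projCompl T x) = 0 := by
  have hu := isUnit_adjoint_comp T hT
  set G := (ContinuousLinearMap.adjoint T).comp T with hG
  have h1 : ∀ y, G (Ring.inverse G y) = y := by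
    intro y
    have h2 : G * Ring.inverse G = 1 := Ring.mul_inverse_cancel G hu
    calc G (Ring.inverse G y) = (G * Ring.inverse G) y := rfl
    _ = y := by rw [h2]; rfl
  simp only [projCompl, ContinuousLinearMap.sub_apply, ContinuousLinearMap.coe_sub',
    ContinuousLinearMap.id_apply, ContinuousLinearMap.comp_apply, map_sub]
  have : ContinuousLinearMap.adjoint T (T ((Ring.inverse G) (ContinuousLinearMap.adjoint T x)))
      = G ((Ring.inverse G) (ContinuousLinearMap.adjoint T x)) := rfl
  rw [this, h1, sub_self]

lemma projCompl_fixed (T : E →L[ℝ] F) {x : F}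
    (hx : ContinuousLinearMap.adjoint T x = 0) : projCompl T x = x := by
  simp [projCompl, ContinuousLinearMap.sub_apply, ContinuousLinearMap.comp_apply, hx, map_zero]

lemma projCompl_idem (T : E →L[ℝ] F) (hT : Function.Injective T) (x : F) :
    projCompl T (projCompl T x) = projCompl T x :=
  projCompl_fixed T (adjoint_projCompl_apply T hT x)

lemma inner_projCompl (T : E →L[ℝ] F) (hT : Function.Injective T) (x : F) (w : E) :
    ⟪projCompl T x, T w⟫ = 0 := by
  rw [← T.adjoint_inner_left, adjoint_projCompl_apply T hT, inner_zero_left]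

lemma projCompl_contDiffOn {Q : Type*} [NormedAddCommGroup Q] [NormedSpace ℝ Q]
    {A : Q → (E →L[ℝ] F)} {s : Set Q} (hA : ContDiffOn ℝ (⊤ : ℕ∞) A s)
    (hinj : ∀ q ∈ s, Function.Injective (A q)) :
    ContDiffOn ℝ (⊤ : ℕ∞) (fun q => projCompl (A q)) s := by
  intro q hq
  have hAq : ContDiffWithinAt ℝ (⊤ : ℕ∞) A s q := hA q hq
  have hadjcd : ContDiffWithinAt ℝ (⊤ : ℕ∞) (fun q => ContinuousLinearMap.adjoint (A q)) s q := by
    have : ContDiff ℝ (⊤ : ℕ∞) (fun T : E →L[ℝ] F => ContinuousLinearMap.adjoint T) := by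
      exact (ContinuousLinearMap.adjoint (𝕜 := ℝ) (E := E) (F := F)
        : (E →L[ℝ] F) ≃ₗᵢ[ℝ] (F →L[ℝ] E)).toContinuousLinearEquiv.toContinuousLinearMap.contDiff
    exact this.contDiffAt.comp_contDiffWithinAt q hAq
  have hG : ContDiffWithinAt ℝ (⊤ : ℕ∞)
      (fun q => (ContinuousLinearMap.adjoint (A q)).comp (A q)) s q :=
    hadjcd.clm_comp hAq
  have hu := isUnit_adjoint_comp (A q) (hinj q hq)
  obtain ⟨u, hu'⟩ := hu
  have hinvcd : ContDiffWithinAt ℝ (⊤ : ℕ∞)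
      (fun q => Ring.inverse ((ContinuousLinearMap.adjoint (A q)).comp (A q))) s q := by
    have h1 : ContDiffAt ℝ (⊤ : ℕ∞) (Ring.inverse : (E →L[ℝ] E) → (E →L[ℝ] E))
        ((ContinuousLinearMap.adjoint (A q)).comp (A q)) := by
      rw [← hu']; exact contDiffAt_ringInverse ℝ u
    exact h1.comp_contDiffWithinAt q hG
  exact contDiffWithinAt_const.sub ((hAq.clm_comp hinvcd).clm_comp hadjcd)

end proj

open scoped RealInnerProductSpace

theorem aux_normal_fields {E F : Type*} [NormedAddCommGroup E] [InnerProductSpace ℝ E]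
    [NormedAddCommGroup F] [InnerProductSpace ℝ F]
    [FiniteDimensional ℝ E] [FiniteDimensional ℝ F]
    (hNn : Module.finrank ℝ E + 2 ≤ Module.finrank ℝ F)
    (ω : E → F)
    (U : Set E) (hU : IsOpen U)
    (hBU : Metric.closedBall 0 1 ⊆ U)
    (hω : ContDiffOn ℝ (⊤ : ℕ∞) ω U)
    (himm : ∀ q ∈ Metric.closedBall (0 : E) 1,
      Function.Injective (fderiv ℝ ω q)) :
    ∃ ν b : E → F,
      ContDiffOn ℝ (⊤ : ℕ∞) ν (Metric.closedBall 0 1) ∧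
      ContDiffOn ℝ (⊤ : ℕ∞) b (Metric.closedBall 0 1) ∧
      ∀ q ∈ Metric.closedBall (0 : E) 1,
        ‖ν q‖ = 1 ∧ ‖b q‖ = 1 ∧ ⟪ν q, b q⟫ = 0 ∧
        ∀ w : E, ⟪ν q, fderiv ℝ ω q w⟫ = 0 ∧ ⟪b q, fderiv ℝ ω q w⟫ = 0 := by
  classical
  set B := Metric.closedBall (0 : E) 1 with hBdef
  set A : E → (E →L[ℝ] F) := fderiv ℝ ω with hAdef
  have hA : ContDiffOn ℝ (⊤ : ℕ∞) A B := (hω.fderiv_of_isOpen (m := (⊤ : ℕ∞)) hU (by simp)).mono hBU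
  set P : E → (F →L[ℝ] F) := fun q => projCompl (A q) with hPdef
  have hPsm : ContDiffOn ℝ (⊤ : ℕ∞) P B := projCompl_contDiffOn hA himm
  have hidem : ∀ q ∈ B, ∀ x, P q (P q x) = P q x :=
    fun q hq x => projCompl_idem (A q) (himm q hq) x
  have h0B : (0 : E) ∈ B := Metric.mem_closedBall_self zero_le_one
  -- initial orthonormal pair in the normal space at 0
  set K : Submodule ℝ F := (LinearMap.range (A 0 : E →ₗ[ℝ] F))ᗮ with hKdef
  have hrange_le : Module.finrank ℝ (LinearMap.range (A 0 : E →ₗ[ℝ] F)) ≤ Module.finrank ℝ E :=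
    LinearMap.finrank_range_le (A 0 : E →ₗ[ℝ] F)
  have hKrank : 2 ≤ Module.finrank ℝ K := by
    rw [hKdef]
    have h1 := Submodule.finrank_add_finrank_orthogonal (K := LinearMap.range (A 0 : E →ₗ[ℝ] F)) (𝕜 := ℝ)
    omega
  set ob := stdOrthonormalBasis ℝ K with hobdef
  set i0 : Fin (Module.finrank ℝ K) := ⟨0, by omega⟩ with hi0
  set i1 : Fin (Module.finrank ℝ K) := ⟨1, by omega⟩ with hi1
  set v : F := (ob i0 : F) with hv0
  set w : F := (ob i1 : F) with hw0
  have hvnorm : ‖v‖ = 1 := by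
    have := ob.orthonormal.1 i0
    exact this
  have hwnorm : ‖w‖ = 1 := by
    have := ob.orthonormal.1 i1
    exact this
  have hvw : ⟪v, w⟫ = 0 := by
    have := ob.orthonormal.2 (show i0 ≠ i1 by simp [hi0, hi1, Fin.ext_iff])
    simpa [Submodule.coe_inner] using this
  have hadj : ∀ x : F, x ∈ K → ContinuousLinearMap.adjoint (A 0) x = 0 := by
    intro x hx
    have hiz : ∀ u : E, ⟪ContinuousLinearMap.adjoint (A 0) x, u⟫ = 0 := by
      intro u
      rw [ContinuousLinearMap.adjoint_inner_left]
      have := (Submodule.mem_orthogonal _ x).mp hx (A 0 u) (LinearMap.mem_range_self _ u)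
      rw [real_inner_comm]
      exact this
    have := hiz (ContinuousLinearMap.adjoint (A 0) x)
    exact inner_self_eq_zero.mp this
  have hPv : P 0 v = v := projCompl_fixed (A 0) (hadj v (ob i0).2)
  have hPw : P 0 w = w := projCompl_fixed (A 0) (hadj w (ob i1).2)
  -- apply the core construction
  obtain ⟨f, g, hfs, hgs, hfg⟩ := core_exists P hPsm hidem v w hPv hPw
  -- nonvanishing of f and of the Gram–Schmidt remainder
  have hindep : ∀ q ∈ B, ∀ a c : ℝ, a • f q + c • g q = 0 → a = 0 ∧ c = 0 := by
    intro q hq a c h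
    have h2 := (hfg q hq).2.2 a c h
    constructor
    · have := congrArg (fun z => ⟪v, z⟫) h2
      simpa [inner_add_right, real_inner_smul_right, hvw,
        real_inner_self_eq_norm_mul_norm, hvnorm] using this
    · have h3 : ⟪w, v⟫ = 0 := by rw [real_inner_comm]; exact hvw
      have := congrArg (fun z => ⟪w, z⟫) h2
      simpa [inner_add_right, real_inner_smul_right, h3,
        real_inner_self_eq_norm_mul_norm, hwnorm] using this
  have hfne : ∀ q ∈ B, f q ≠ 0 := by
    intro q hq h
    have := (hindep q hq 1 0 (by simp [h])).1
    norm_num at this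
  set ν : E → F := fun q => ‖f q‖⁻¹ • f q with hνdef
  set y : E → F := fun q => g q - (⟪ν q, g q⟫) • ν q with hydef
  have hyeq : ∀ q, y q = (-(⟪ν q, g q⟫ * ‖f q‖⁻¹)) • f q + (1:ℝ) • g q := by
    intro q
    simp only [hydef, hνdef, smul_smul]
    module
  have hyne : ∀ q ∈ B, y q ≠ 0 := by
    intro q hq h
    rw [hyeq q] at h
    have := (hindep q hq _ _ h).2
    norm_num at this
  set b : E → F := fun q => ‖y q‖⁻¹ • y q with hbdef
  refine ⟨ν, b, ?_, ?_, ?_⟩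
  · -- smoothness of ν
    intro q hq
    have h1 : ContDiffWithinAt ℝ (⊤ : ℕ∞) f B q := hfs q hq
    have hnorm : ContDiffWithinAt ℝ (⊤ : ℕ∞) (fun q => ‖f q‖) B q :=
      (contDiffAt_norm ℝ (hfne q hq)).comp_contDiffWithinAt q h1
    exact (hnorm.inv (norm_ne_zero_iff.mpr (hfne q hq))).smul h1
  · -- smoothness of b
    intro q hq
    have h1 : ContDiffWithinAt ℝ (⊤ : ℕ∞) f B q := hfs q hq
    have h2 : ContDiffWithinAt ℝ (⊤ : ℕ∞) g B q := hgs q hq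
    have hnorm : ContDiffWithinAt ℝ (⊤ : ℕ∞) (fun q => ‖f q‖) B q :=
      (contDiffAt_norm ℝ (hfne q hq)).comp_contDiffWithinAt q h1
    have hν1 : ContDiffWithinAt ℝ (⊤ : ℕ∞) ν B q :=
      (hnorm.inv (norm_ne_zero_iff.mpr (hfne q hq))).smul h1
    have hy1 : ContDiffWithinAt ℝ (⊤ : ℕ∞) y B q :=
      h2.sub ((ContDiffWithinAt.inner ℝ hν1 h2).smul hν1)
    have hynorm : ContDiffWithinAt ℝ (⊤ : ℕ∞) (fun q => ‖y q‖) B q :=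
      (contDiffAt_norm ℝ (hyne q hq)).comp_contDiffWithinAt q hy1
    exact (hynorm.inv (norm_ne_zero_iff.mpr (hyne q hq))).smul hy1
  · intro q hq
    have hfnz := hfne q hq
    have hynz := hyne q hq
    have hνnorm : ‖ν q‖ = 1 := by
      rw [hνdef]
      simp [norm_smul, inv_mul_cancel₀ (norm_ne_zero_iff.mpr hfnz)]
    have hbnorm : ‖b q‖ = 1 := by
      rw [hbdef]
      simp [norm_smul, inv_mul_cancel₀ (norm_ne_zero_iff.mpr hynz)]
    have hνy : ⟪ν q, y q⟫ = 0 := by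
      simp only [hydef, inner_sub_right, real_inner_smul_right]
      rw [real_inner_self_eq_norm_mul_norm, hνnorm]
      ring
    have hob : ⟪ν q, b q⟫ = 0 := by
      rw [hbdef]
      simp only [real_inner_smul_right, hνy, mul_zero]
    -- orthogonality to the range
    have hPf : P q (f q) = f q := (hfg q hq).1
    have hPg : P q (g q) = g q := (hfg q hq).2.1
    have hforth : ∀ u : E, ⟪f q, A q u⟫ = 0 := by
      intro u
      rw [← hPf]
      exact inner_projCompl (A q) (himm q hq) (f q) u
    have hgorth : ∀ u : E, ⟪g q, A q u⟫ = 0 := by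
      intro u
      rw [← hPg]
      exact inner_projCompl (A q) (himm q hq) (g q) u
    have hνorth : ∀ u : E, ⟪ν q, A q u⟫ = 0 := by
      intro u
      rw [hνdef]
      simp [real_inner_smul_left, hforth u]
    have hborth : ∀ u : E, ⟪b q, A q u⟫ = 0 := by
      intro u
      rw [hbdef, hydef]
      simp [real_inner_smul_left, inner_sub_left, hgorth u, hνorth u]
    exact ⟨hνnorm, hbnorm, hob, fun u => ⟨hνorth u, hborth u⟩⟩


/-- **Existence of an orthonormal pair of normal fields over the ball.** Let `B̄` be the closed
unit ball of `ℝ^n`, `N ≥ n + 2`, and let `ω : B̄ → ℝ^N` be smooth (the restriction of a smooth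
map on an open neighborhood of `B̄`) with injective differential at every point of `B̄`. Then
there are smooth maps `ν, b : B̄ → ℝ^N` which at every `q ∈ B̄` are unit, mutually orthogonal,
and orthogonal to the range of `Dω(q)`. -/
theorem orthonormal_normal_fields_on_ball
    (n N : ℕ) (hN : n + 2 ≤ N)
    (ω : EuclideanSpace ℝ (Fin n) → EuclideanSpace ℝ (Fin N))
    (U : Set (EuclideanSpace ℝ (Fin n))) (hU : IsOpen U)
    (hBU : Metric.closedBall 0 1 ⊆ U)
    (hω : ContDiffOn ℝ (⊤ : ℕ∞) ω U)
    (himm : ∀ q ∈ Metric.closedBall (0 : EuclideanSpace ℝ (Fin n)) 1,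
      Function.Injective (fderiv ℝ ω q)) :
    ∃ ν b : EuclideanSpace ℝ (Fin n) → EuclideanSpace ℝ (Fin N),
      ContDiffOn ℝ (⊤ : ℕ∞) ν (Metric.closedBall 0 1) ∧
      ContDiffOn ℝ (⊤ : ℕ∞) b (Metric.closedBall 0 1) ∧
      ∀ q ∈ Metric.closedBall (0 : EuclideanSpace ℝ (Fin n)) 1,
        ‖ν q‖ = 1 ∧ ‖b q‖ = 1 ∧ ⟪ν q, b q⟫ = 0 ∧
        ∀ w : EuclideanSpace ℝ (Fin n),
          ⟪ν q, fderiv ℝ ω q w⟫ = 0 ∧ ⟪b q, fderiv ℝ ω q w⟫ = 0 := by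
  apply aux_normal_fields _ ω U hU hBU hω himm
  simp only [finrank_euclideanSpace_fin]
  exact hN
end

section
/- There is a constant c > 0 depending only on n such that for every strictly positive Schwartz function T on ℝ^n with ∫_{ℝ^n} T(x) dx = 1, one has ∫_{ℝ^n} |x| T(x) dx ≥ c · exp( −(1/n) ∫_{ℝ^n} T(x) log T(x) dx ). -/
/-!
Gibbs' inequality `∫ T log g ≤ ∫ T log T`, applied to the exponential probability density
`g(x) = l ^ n / Z * exp (-l |x|)` with `Z = ∫ exp (-|x|)`, gives
`∫ T log T ≥ n log l - log Z - l ∫ |x| T`. The choice `l = n / ∫ |x| T` turns this into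
`exp (-(1/n) ∫ T log T) ≤ e Z^(1/n) / n · ∫ |x| T`.
-/

open MeasureTheory Real SchwartzMap

theorem Real.mul_log_le_mul_log_add_sub {s t : ℝ} (hs : 0 < s) (ht : 0 < t) :
    t * log s ≤ t * log t + (s - t) := by
  have h := mul_le_mul_of_nonneg_left (log_le_sub_one_of_pos (div_pos hs ht)) ht.le
  rw [log_div hs.ne' ht.ne', mul_sub_one, mul_div_cancel₀ _ ht.ne'] at h
  linarith

section Gibbs

variable {α : Type*} [MeasurableSpace α] {μ : Measure α} {f g : α → ℝ}

theorem integrable_mul_log_of_le (hf : ∀ x, 0 < f x) (hg : ∀ x, 0 < g x) {A : ℝ}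
    (hfA : ∀ x, f x ≤ A) (hfi : Integrable f μ) (hgi : Integrable g μ)
    (hfg : Integrable (fun x ↦ f x * log (g x)) μ) :
    Integrable (fun x ↦ f x * log (f x)) μ := by
  refine integrable_of_le_of_le (g₁ := fun x ↦ f x * log (g x) - (g x - f x))
    (g₂ := fun x ↦ log A * f x) ?_ (.of_forall fun x ↦ ?_) (.of_forall fun x ↦ ?_)
    (hfg.sub (hgi.sub hfi)) (hfi.const_mul _)
  · exact hfi.1.mul (measurable_log.comp_aemeasurable hfi.1.aemeasurable).aestronglyMeasurable
  · linarith [mul_log_le_mul_log_add_sub (hg x) (hf x)]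
  · dsimp only
    rw [mul_comm (log A)]
    exact mul_le_mul_of_nonneg_left (log_le_log (hf x) (hfA x)) (hf x).le

theorem integral_mul_log_le_integral_mul_log (hf : ∀ x, 0 < f x) (hg : ∀ x, 0 < g x)
    (hfi : Integrable f μ) (hgi : Integrable g μ)
    (hfg : Integrable (fun x ↦ f x * log (g x)) μ) (hff : Integrable (fun x ↦ f x * log (f x)) μ)
    (hmass : ∫ x, g x ∂μ ≤ ∫ x, f x ∂μ) :
    ∫ x, f x * log (g x) ∂μ ≤ ∫ x, f x * log (f x) ∂μ := by
  have hgf : Integrable (fun x ↦ g x - f x) μ := hgi.sub hfi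
  have h : ∫ x, f x * log (g x) ∂μ ≤ ∫ x, (f x * log (f x) + (g x - f x)) ∂μ :=
    integral_mono hfg (hff.add hgf) fun x ↦ mul_log_le_mul_log_add_sub (hg x) (hf x)
  rw [integral_add hff hgf, integral_sub hgi hfi] at h
  linarith

end Gibbs

section ExponentialDensity

variable {E : Type*} [NormedAddCommGroup E] [NormedSpace ℝ E] [FiniteDimensional ℝ E]
  [MeasurableSpace E] [BorelSpace E] (μ : Measure E) [μ.IsAddHaarMeasure]

theorem integrable_exp_neg_mul_norm [Nontrivial E] {l : ℝ} (hl : 0 < l) :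
    Integrable (fun x ↦ exp (-(l * ‖x‖))) μ := by
  rw [integrable_fun_norm_addHaar μ (f := fun r ↦ exp (-(l * r)))]
  refine (integrableOn_rpow_mul_exp_neg_mul_rpow (s := (Module.finrank ℝ E - 1 : ℕ))
    (p := 1) (neg_one_lt_zero.trans_le (Nat.cast_nonneg _)) one_pos hl).congr_fun
    (fun r _ ↦ ?_) measurableSet_Ioi
  simp [rpow_natCast]

theorem integral_exp_neg_mul_norm {l : ℝ} (hl : 0 < l) :
    ∫ x, exp (-(l * ‖x‖)) ∂μ = (l ^ Module.finrank ℝ E)⁻¹ * ∫ x, exp (-‖x‖) ∂μ := by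
  have h := μ.integral_comp_smul (fun y ↦ exp (-‖y‖)) l
  simp only [norm_smul, norm_eq_abs, abs_of_pos hl, smul_eq_mul] at h
  rw [h, abs_of_pos (by positivity)]

theorem integral_exp_neg_norm_pos [Nontrivial E] : 0 < ∫ x, exp (-‖x‖) ∂μ :=
  integral_exp_pos (by simpa using integrable_exp_neg_mul_norm μ one_pos)

end ExponentialDensity

theorem integral_norm_mul_pos {E : Type*} [NormedAddCommGroup E] [Nontrivial E]
    [MeasurableSpace E] {μ : Measure E} [μ.IsOpenPosMeasure] {f : E → ℝ}
    (hf : ∀ x, 0 < f x) (hfm : Integrable (fun x ↦ ‖x‖ * f x) μ) :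
    0 < ∫ x, ‖x‖ * f x ∂μ := by
  refine (integral_pos_iff_support_of_nonneg (fun x ↦ mul_nonneg (norm_nonneg x) (hf x).le)
    hfm).2 ?_
  have hsupp : Function.support (fun x ↦ ‖x‖ * f x) = {0}ᶜ := by
    ext x
    simp [(hf x).ne']
  rw [hsupp]
  exact isOpen_compl_singleton.measure_pos μ (exists_ne 0)

section Entropy

variable {E : Type*} [NormedAddCommGroup E] [NormedSpace ℝ E] [FiniteDimensional ℝ E]
  [MeasurableSpace E] [BorelSpace E] [Nontrivial E] {μ : Measure E} [μ.IsAddHaarMeasure]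
  {f : E → ℝ}

/-- Gibbs' inequality against the exponential density `l ^ d / Z * exp (-l ‖x‖)`. -/
theorem log_div_sub_mul_le_integral_mul_log (hf : ∀ x, 0 < f x) (hfi : Integrable f μ)
    (hf1 : ∫ x, f x ∂μ = 1) (hfm : Integrable (fun x ↦ ‖x‖ * f x) μ)
    (hff : Integrable (fun x ↦ f x * log (f x)) μ) {l : ℝ} (hl : 0 < l) :
    log (l ^ Module.finrank ℝ E / ∫ x, exp (-‖x‖) ∂μ) - l * ∫ x, ‖x‖ * f x ∂μ ≤
      ∫ x, f x * log (f x) ∂μ := by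
  set a := l ^ Module.finrank ℝ E / ∫ x, exp (-‖x‖) ∂μ
  have ha : 0 < a := div_pos (by positivity) (integral_exp_neg_norm_pos μ)
  have hlog : ∀ x, f x * log (a * exp (-(l * ‖x‖))) = log a * f x - l * (‖x‖ * f x) := by
    intro x
    rw [log_mul ha.ne' (exp_pos _).ne', log_exp]
    ring
  have hfg : Integrable (fun x ↦ log a * f x - l * (‖x‖ * f x)) μ :=
    (hfi.const_mul _).sub (hfm.const_mul _)
  have hmass : ∫ x, a * exp (-(l * ‖x‖)) ∂μ = 1 := by
    rw [integral_const_mul, integral_exp_neg_mul_norm μ hl]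
    simp only [a]
    field_simp [(integral_exp_neg_norm_pos μ).ne']
  have h := integral_mul_log_le_integral_mul_log hf (fun x ↦ by positivity) hfi
    ((integrable_exp_neg_mul_norm μ hl).const_mul a) (by simpa only [hlog] using hfg) hff
    (by rw [hmass, hf1])
  simpa only [hlog, integral_sub (hfi.const_mul _) (hfm.const_mul _), integral_const_mul, hf1,
    mul_one] using h

theorem exp_neg_integral_mul_log_le (hf : ∀ x, 0 < f x) (hfi : Integrable f μ)
    (hf1 : ∫ x, f x ∂μ = 1) (hfm : Integrable (fun x ↦ ‖x‖ * f x) μ)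
    (hff : Integrable (fun x ↦ f x * log (f x)) μ) :
    exp (-(1 / Module.finrank ℝ E) * ∫ x, f x * log (f x) ∂μ) ≤
      exp (log (∫ x, exp (-‖x‖) ∂μ) / Module.finrank ℝ E + 1) / Module.finrank ℝ E *
        ∫ x, ‖x‖ * f x ∂μ := by
  have hd : 0 < (Module.finrank ℝ E : ℝ) := mod_cast Module.finrank_pos
  have hM : 0 < ∫ x, ‖x‖ * f x ∂μ := integral_norm_mul_pos hf hfm
  have hZ : 0 < ∫ x, exp (-‖x‖) ∂μ := integral_exp_neg_norm_pos μ
  -- the exponential density with `l = d / M` has the same mean norm `M` as `f`; this `l` is optimal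
  have h := log_div_sub_mul_le_integral_mul_log hf hfi hf1 hfm hff (div_pos hd hM)
  rw [log_div (by positivity) hZ.ne', log_pow, log_div hd.ne' hM.ne',
    div_mul_cancel₀ _ hM.ne'] at h
  set d : ℝ := (Module.finrank ℝ E : ℝ)
  set M := ∫ x, ‖x‖ * f x ∂μ
  set Z := ∫ x, exp (-‖x‖) ∂μ
  have hscaled :
      1 / d * (d * (log d - log M) - log Z - d) = log d - log M - (log Z / d + 1) := by
    field_simp
    ring
  calc exp (-(1 / d) * ∫ x, f x * log (f x) ∂μ)
      ≤ exp (log M - log d + (log Z / d + 1)) := by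
        have := mul_le_mul_of_nonneg_left h (one_div_nonneg.2 hd.le)
        gcongr
        linarith
    _ = exp (log Z / d + 1) / d * M := by
        rw [exp_add, exp_sub, exp_log hM, exp_log hd]
        ring

end Entropy

namespace SchwartzMap

variable {E : Type*} [NormedAddCommGroup E] [NormedSpace ℝ E] [FiniteDimensional ℝ E]
  [MeasurableSpace E] [BorelSpace E] {μ : Measure E} [μ.IsAddHaarMeasure]

theorem integrable_norm_mul (T : 𝓢(E, ℝ)) : Integrable (fun x ↦ ‖x‖ * T x) μ :=
  (T.integrable_pow_mul μ 1).mono (by fun_prop) (.of_forall fun x ↦ by simp)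

theorem integrable_mul_log [Nontrivial E] (T : 𝓢(E, ℝ)) (hT : ∀ x, 0 < T x) :
    Integrable (fun x ↦ T x * log (T x)) μ :=
  integrable_mul_log_of_le hT (fun x ↦ exp_pos (-‖x‖))
    (fun x ↦ (le_abs_self _).trans (T.norm_le_seminorm ℝ x)) T.integrable
    (by simpa using integrable_exp_neg_mul_norm μ one_pos)
    (by simpa [mul_comm] using (T.integrable_norm_mul (μ := μ)).neg)

end SchwartzMap

/-- **Carleson's inequality.** There is a constant `c > 0`, depending only on `n`, such that
every strictly positive Schwartz function `T` on `ℝ^n` with `∫ T = 1` satisfies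
`∫ |x| T(x) dx ≥ c · exp(−(1/n) ∫ T log T)`. -/
theorem carleson_inequality (n : ℕ) (hn : 0 < n) :
    ∃ c > (0 : ℝ), ∀ T : SchwartzMap (EuclideanSpace ℝ (Fin n)) ℝ,
      (∀ x, 0 < T x) → (∫ x, T x) = 1 →
      c * Real.exp (-(1 / n) * ∫ x, T x * Real.log (T x)) ≤ ∫ x, ‖x‖ * T x := by
  have : NeZero n := ⟨hn.ne'⟩
  set D := log (∫ x : EuclideanSpace ℝ (Fin n), exp (-‖x‖)) / n + 1
  refine ⟨n / exp D, by positivity, fun T hT hT1 ↦ ?_⟩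
  have h := exp_neg_integral_mul_log_le (μ := volume) hT T.integrable hT1 T.integrable_norm_mul
    (T.integrable_mul_log hT)
  rw [finrank_euclideanSpace_fin] at h
  calc n / exp D * exp (-(1 / n) * ∫ x, T x * log (T x))
      ≤ n / exp D * (exp D / n * ∫ x, ‖x‖ * T x) := by gcongr
    _ = ∫ x, ‖x‖ * T x := by field_simp
end
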